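/- Suppose that for every pair of elements x, y ∈ G the commutator [x,y] has finite order. Then the subgroup L₁₂ = ⁅L₁,L₂⁆ of the weak commutativity group χ(G) is periodic (every element has finite order). -/

import Mathlib

/-
The projection `χ(G) → G × G` has kernel `K` inside the normal closure of `D = ⁅G₁, G₂⁆`, so by
Sidki's lemma `⁅D, L⁆ = 1` the kernel centralizes the normal subgroup `L`. As `L₁` projects into
`G × 1` and `L₂` into `1 × G`, every commutator `⁅x, y⁆` with `x ∈ L₁`, `y ∈ L₂` lies in the abelian
group `K ⊓ L`, and `x ↦ ⁅x, y⁆` is an antihomomorphism on `L₁`. A generator `⁅l, g⁆` of `L₁`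
projects to `(⁅l', g⁆, 1)`, so a power of it lies in `K` and hence commutes with `y`; this makes
`⁅⁅l, g⁆, y⁆` of finite order. Thus `L₁₂` is generated by commuting elements of finite order.
-/

open Subgroup
open scoped commutatorElement

/-- The weak commutativity relations inside the free product `G ∗ G`. -/
def chiRel (G : Type*) [Group G] : Subgroup (Monoid.Coprod G G) :=
  Subgroup.normalClosure
    {x | ∃ g : G, x = Monoid.Coprod.inl g * Monoid.Coprod.inr g *
      (Monoid.Coprod.inl g)⁻¹ * (Monoid.Coprod.inr g)⁻¹}

instance chiRel_normal (G : Type*) [Group G] : (chiRel G).Normal :=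
  Subgroup.normalClosure_normal

/-- The weak commutativity group `χ(G)`. -/
def Chi (G : Type*) [Group G] : Type _ := Monoid.Coprod G G ⧸ chiRel G

instance (G : Type*) [Group G] : Group (Chi G) :=
  inferInstanceAs (Group (Monoid.Coprod G G ⧸ chiRel G))

/-- The canonical map `G → χ(G)`, `g ↦ g`. -/
def chiIota1 (G : Type*) [Group G] : G →* Chi G :=
  (QuotientGroup.mk' (chiRel G)).comp Monoid.Coprod.inl

/-- The canonical map `G → χ(G)`, `g ↦ g^φ`. -/
def chiIota2 (G : Type*) [Group G] : G →* Chi G :=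
  (QuotientGroup.mk' (chiRel G)).comp Monoid.Coprod.inr

/-- `G₁ ≤ χ(G)`. -/
def chiG1 (G : Type*) [Group G] : Subgroup (Chi G) := (chiIota1 G).range

/-- `G₂ = G^φ ≤ χ(G)`. -/
def chiG2 (G : Type*) [Group G] : Subgroup (Chi G) := (chiIota2 G).range

/-- `L = ⟨g⁻¹ g^φ : g ∈ G⟩`. -/
def chiL (G : Type*) [Group G] : Subgroup (Chi G) :=
  Subgroup.closure {x | ∃ g : G, x = (chiIota1 G g)⁻¹ * chiIota2 G g}

/-- `D = ⁅G₁, G₂⁆`. -/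
def chiD (G : Type*) [Group G] : Subgroup (Chi G) := ⁅chiG1 G, chiG2 G⁆

/-- `L₁ = ⁅L, G₁⁆`. -/
def chiL1 (G : Type*) [Group G] : Subgroup (Chi G) := ⁅chiL G, chiG1 G⁆

/-- `L₂ = ⁅L, G₂⁆`. -/
def chiL2 (G : Type*) [Group G] : Subgroup (Chi G) := ⁅chiL G, chiG2 G⁆

/-- `R = ⁅⁅G₁, L⁆, G₂⁆`. -/
def chiR (G : Type*) [Group G] : Subgroup (Chi G) := ⁅⁅chiG1 G, chiL G⁆, chiG2 G⁆

/-- `L₁₂ = ⁅L₁, L₂⁆`. -/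
def chiL12 (G : Type*) [Group G] : Subgroup (Chi G) := ⁅chiL1 G, chiL2 G⁆

section CommutatorTorsion

variable {M : Type*} [Group M]

theorem commutatorElement_pow_left_of_commute {x y : M} (h : Commute x ⁅x, y⁆) (n : ℕ) :
    ⁅x ^ n, y⁆ = ⁅x, y⁆ ^ n := by
  induction n with
  | zero => simp
  | succ n ih =>
    rw [pow_succ', commutatorElement_mul_left_eq_conj_mul, ih, (h.pow_right n).mul_inv_cancel,
      pow_succ]

theorem Subgroup.isOfFinOrder_of_mem_closure {S : Set M}
    (hcomm : ∀ a ∈ S, ∀ b ∈ S, Commute a b) (htors : ∀ a ∈ S, IsOfFinOrder a) {x : M}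
    (hx : x ∈ closure S) : IsOfFinOrder x := by
  have hcent : closure S ≤ centralizer (closure S) := by
    rw [centralizer_closure, closure_le]
    exact fun a ha => mem_centralizer_iff.mpr fun b hb => hcomm b hb a ha
  induction hx using closure_induction with
  | mem a ha => exact htors a ha
  | one => exact .one
  | mul a b ha hb iha ihb =>
    exact Commute.isOfFinOrder_mul (mem_centralizer_iff.mp (hcent hb) a ha) iha ihb
  | inv a _ iha => exact iha.inv

theorem Subgroup.commutatorElement_mem_closure_image {S : Set M} {y : M}
    (h : ∀ x ∈ closure S, ∀ x' ∈ closure S, Commute x ⁅x', y⁆) {x : M} (hx : x ∈ closure S) :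
    ⁅x, y⁆ ∈ closure ((⁅·, y⁆) '' S) := by
  induction hx using closure_induction with
  | mem a ha => exact subset_closure ⟨a, ha, rfl⟩
  | one => simp
  | mul a b ha hb iha ihb =>
    rw [commutatorElement_mul_left_eq_conj_mul, (h a ha b hb).mul_inv_cancel]
    exact mul_mem ihb iha
  | inv a ha iha =>
    rw [commutatorElement_inv_left, ← commutatorElement_inv,
      (h a ha a ha).inv_right.inv_mul_cancel]
    exact inv_mem iha

end CommutatorTorsion

section PeriodicCommutator

variable {M : Type*} [Group M] {K L : Subgroup M}

theorem Subgroup.isOfFinOrder_commutatorElement_of_pow_mem (hKL : K ≤ centralizer L) {x y : M}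
    (hx : x ∈ L) (hy : y ∈ L) (hxy : ⁅x, y⁆ ∈ K) {n : ℕ} (hn : 0 < n) (hxn : x ^ n ∈ K) :
    IsOfFinOrder ⁅x, y⁆ := by
  have hcomm : Commute x ⁅x, y⁆ := mem_centralizer_iff.mp (hKL hxy) x hx
  refine isOfFinOrder_iff_pow_eq_one.mpr ⟨n, hn, ?_⟩
  rw [← commutatorElement_pow_left_of_commute hcomm, commutatorElement_eq_one_iff_commute]
  exact (mem_centralizer_iff.mp (hKL hxn) y hy).symm

theorem Subgroup.isOfFinOrder_of_mem_commutator_closure (hKL : K ≤ centralizer L) {S : Set M}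
    {H : Subgroup M} (hSL : closure S ≤ L) (hHL : H ≤ L) (hSH : ⁅closure S, H⁆ ≤ K)
    (hSK : ∀ s ∈ S, ∃ n, 0 < n ∧ s ^ n ∈ K) {z : M} (hz : z ∈ ⁅closure S, H⁆) :
    IsOfFinOrder z := by
  have hmem : ∀ x ∈ closure S, ∀ y ∈ H, ⁅x, y⁆ ∈ K ⊓ L := fun x hx y hy =>
    ⟨hSH (commutator_mem_commutator hx hy),
      (commutator_mono hSL hHL).trans (commutator_le_self L) (commutator_mem_commutator hx hy)⟩
  have hcommKL : ∀ a ∈ K ⊓ L, ∀ b ∈ K ⊓ L, Commute a b := fun a ha b hb =>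
    (mem_centralizer_iff.mp (hKL ha.1) b hb.2).symm
  have hfin : ∀ x ∈ closure S, ∀ y ∈ H, IsOfFinOrder ⁅x, y⁆ := by
    intro x hx y hy
    refine isOfFinOrder_of_mem_closure ?_ ?_ (commutatorElement_mem_closure_image ?_ hx)
    · rintro _ ⟨s, hs, rfl⟩ _ ⟨t, ht, rfl⟩
      exact hcommKL _ (hmem s (subset_closure hs) y hy) _ (hmem t (subset_closure ht) y hy)
    · rintro _ ⟨s, hs, rfl⟩
      obtain ⟨n, hn, hsn⟩ := hSK s hs
      exact isOfFinOrder_commutatorElement_of_pow_mem hKL (hSL (subset_closure hs)) (hHL hy)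
        (hmem s (subset_closure hs) y hy).1 hn hsn
    · intro a ha b hb
      exact mem_centralizer_iff.mp (hKL (hmem b hb y hy).1) a (hSL ha)
  rw [commutator_def] at hz
  refine isOfFinOrder_of_mem_closure ?_ ?_ hz
  · rintro _ ⟨x, hx, y, hy, rfl⟩ _ ⟨x', hx', y', hy', rfl⟩
    exact hcommKL _ (hmem x hx y hy) _ (hmem x' hx' y' hy')
  · rintro _ ⟨x, hx, y, hy, rfl⟩
    exact hfin x hx y hy

end PeriodicCommutator

section WeaklyCommutingHoms

variable {G M : Type*} [Group G] [Group M] {a b : G →* M}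

theorem MonoidHom.commutatorElement_apply_swap (hab : ∀ g, Commute (a g) (b g)) (x y : G) :
    ⁅a x, b y⁆ = ⁅b x, a y⁆ := by
  have key : b x * (a x)⁻¹ * a y * (b x)⁻¹ * b y = b y * (a x)⁻¹ * a y := by
    have h := (hab (x⁻¹ * y)).eq
    simp only [map_mul, map_inv] at h
    calc b x * (a x)⁻¹ * a y * (b x)⁻¹ * b y
        = b x * ((a x)⁻¹ * a y * ((b x)⁻¹ * b y)) := by group
      _ = b x * ((b x)⁻¹ * b y * ((a x)⁻¹ * a y)) := by rw [h]
      _ = b y * (a x)⁻¹ * a y := by group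
  calc ⁅a x, b y⁆ = a x * b y * (a x)⁻¹ * (a y * (b y)⁻¹ * (a y)⁻¹) := by
        rw [(hab y).inv_right.mul_inv_cancel, commutatorElement_def]
    _ = a x * (b x * (a x)⁻¹ * a y * (b x)⁻¹ * b y) * (b y)⁻¹ * (a y)⁻¹ := by rw [key]; group
    _ = (a x * b x * (a x)⁻¹) * a y * (b x)⁻¹ * (a y)⁻¹ := by group
    _ = ⁅b x, a y⁆ := by rw [(hab x).mul_inv_cancel, commutatorElement_def]

theorem MonoidHom.conj_commutatorElement_apply_eq (hab : ∀ g, Commute (a g) (b g)) (x y z : G) :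
    a z * ⁅a x, b y⁆ * (a z)⁻¹ = b z * ⁅a x, b y⁆ * (b z)⁻¹ := by
  have h := commutatorElement_apply_swap hab (z * x) y
  rw [map_mul, map_mul, commutatorElement_mul_left_eq_conj_mul,
    commutatorElement_mul_left_eq_conj_mul, ← commutatorElement_apply_swap hab x y,
    ← commutatorElement_apply_swap hab z y] at h
  exact mul_right_cancel h

-- Sidki's lemma `⁅D, L⁆ = 1`, on generators.
theorem MonoidHom.commute_commutatorElement_apply_inv_mul (hab : ∀ g, Commute (a g) (b g))
    (x y z : G) : Commute ⁅a x, b y⁆ ((a z)⁻¹ * b z) := by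
  have h := conj_commutatorElement_apply_eq hab x y z
  calc ⁅a x, b y⁆ * ((a z)⁻¹ * b z) = (a z)⁻¹ * (a z * ⁅a x, b y⁆ * (a z)⁻¹) * b z := by group
    _ = (a z)⁻¹ * b z * ⁅a x, b y⁆ := by rw [h]; group

theorem MonoidHom.range_sup_range_le_normalizer_closure_inv_mul (a b : G →* M) :
    a.range ⊔ b.range ≤ normalizer (closure {w | ∃ g, w = (a g)⁻¹ * b g}) := by
  have hgen : ∀ g, (a g)⁻¹ * b g ∈ closure {w | ∃ g, w = (a g)⁻¹ * b g} :=
    fun g => subset_closure ⟨g, rfl⟩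
  rw [sup_le_iff, le_normalizer_closure_iff, le_normalizer_closure_iff]
  constructor <;> rintro _ ⟨y, rfl⟩ _ ⟨x, rfl⟩
  · have e : a y * ((a x)⁻¹ * b x) * (a y)⁻¹ =
        (a (x * y⁻¹))⁻¹ * b (x * y⁻¹) * ((a y⁻¹)⁻¹ * b y⁻¹)⁻¹ := by
      simp only [map_mul, map_inv]; group
    rw [e]
    exact mul_mem (hgen _) (inv_mem (hgen _))
  · have e : b y * ((a x)⁻¹ * b x) * (b y)⁻¹ =
        ((a y⁻¹)⁻¹ * b y⁻¹)⁻¹ * ((a (x * y⁻¹))⁻¹ * b (x * y⁻¹)) := by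
      simp only [map_mul, map_inv]; group
    rw [e]
    exact mul_mem (inv_mem (hgen _)) (hgen _)

end WeaklyCommutingHoms

section WeakCommutativity

variable (G : Type*) [Group G]

theorem chiIota1_commute_chiIota2 (g : G) : Commute (chiIota1 G g) (chiIota2 G g) :=
  commutatorElement_eq_one_iff_commute.mp <|
    (QuotientGroup.eq_one_iff _).mpr <| subset_normalClosure ⟨g, rfl⟩

theorem chiG1_sup_chiG2 : chiG1 G ⊔ chiG2 G = ⊤ := by
  show ((QuotientGroup.mk' (chiRel G)).comp Monoid.Coprod.inl).range ⊔
    ((QuotientGroup.mk' (chiRel G)).comp Monoid.Coprod.inr).range = ⊤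
  rw [MonoidHom.range_comp, MonoidHom.range_comp, ← Subgroup.map_sup,
    Monoid.Coprod.range_inl_sup_range_inr, ← MonoidHom.range_eq_map, QuotientGroup.range_mk']

instance chiL_normal : (chiL G).Normal :=
  normalizer_eq_top_iff.mp <| top_le_iff.mp <| chiG1_sup_chiG2 G ▸
    (chiIota1 G).range_sup_range_le_normalizer_closure_inv_mul (chiIota2 G)

theorem chiL1_le_chiL : chiL1 G ≤ chiL G := commutator_le_left _ _

theorem chiL2_le_chiL : chiL2 G ≤ chiL G := commutator_le_left _ _

theorem chiD_le_centralizer_chiL : chiD G ≤ centralizer (chiL G) := by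
  rw [chiD, commutator_le]
  rintro _ ⟨x, rfl⟩ _ ⟨y, rfl⟩
  rw [chiL, centralizer_closure, mem_centralizer_iff]
  rintro _ ⟨z, rfl⟩
  exact ((chiIota1 G).commute_commutatorElement_apply_inv_mul (chiIota1_commute_chiIota2 G)
    x y z).eq.symm

def chiProj : Chi G →* G × G :=
  QuotientGroup.lift (chiRel G) Monoid.Coprod.toProd <| normalClosure_le_normal <| by
    rintro _ ⟨g, rfl⟩
    simp [MonoidHom.mem_ker, Prod.ext_iff]

theorem chi_hom_ext {M : Type*} [Monoid M] {f f' : Chi G →* M}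
    (h₁ : f.comp (chiIota1 G) = f'.comp (chiIota1 G))
    (h₂ : f.comp (chiIota2 G) = f'.comp (chiIota2 G)) : f = f' :=
  QuotientGroup.monoidHom_ext _ (Monoid.Coprod.hom_ext h₁ h₂)

theorem chiProj_chiIota1 (g : G) : chiProj G (chiIota1 G g) = (g, 1) := rfl

theorem chiProj_chiIota2 (g : G) : chiProj G (chiIota2 G g) = (1, g) := rfl

theorem ker_chiProj_le_normalClosure_chiD : (chiProj G).ker ≤ normalClosure (chiD G) := by
  let q := QuotientGroup.mk' (normalClosure (chiD G : Set (Chi G)))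
  have hcomm : ∀ x y : G, Commute ((q.comp (chiIota1 G)) x) ((q.comp (chiIota2 G)) y) := by
    intro x y
    rw [← commutatorElement_eq_one_iff_commute, MonoidHom.comp_apply, MonoidHom.comp_apply,
      ← map_commutatorElement, QuotientGroup.mk'_apply, QuotientGroup.eq_one_iff]
    exact subset_normalClosure (commutator_mem_commutator ⟨x, rfl⟩ ⟨y, rfl⟩)
  have hfactor : ((q.comp (chiIota1 G)).noncommCoprod _ hcomm).comp (chiProj G) = q := by
    refine chi_hom_ext G ?_ ?_ <;> ext <;>
      simp [chiProj_chiIota1, chiProj_chiIota2, MonoidHom.noncommCoprod_apply]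
  intro z hz
  rw [← QuotientGroup.eq_one_iff, ← QuotientGroup.mk'_apply]
  change q z = 1
  rw [← hfactor, MonoidHom.comp_apply, hz, map_one]

theorem ker_chiProj_le_centralizer_chiL : (chiProj G).ker ≤ centralizer (chiL G) :=
  (ker_chiProj_le_normalClosure_chiD G).trans <|
    normalClosure_le_normal (chiD_le_centralizer_chiL G)

theorem chiL12_le_ker_chiProj : chiL12 G ≤ (chiProj G).ker := by
  have h1 : chiL1 G ≤ ((MonoidHom.snd G G).comp (chiProj G)).ker :=
    (commutator_mono le_rfl (by rintro _ ⟨g, rfl⟩; rfl)).trans (commutator_le_right _ _)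
  have h2 : chiL2 G ≤ ((MonoidHom.fst G G).comp (chiProj G)).ker :=
    (commutator_mono le_rfl (by rintro _ ⟨g, rfl⟩; rfl)).trans (commutator_le_right _ _)
  rw [chiL12, commutator_le]
  intro x hx y hy
  have hx2 : (chiProj G x).2 = 1 := h1 hx
  have hy1 : (chiProj G y).1 = 1 := h2 hy
  rw [MonoidHom.mem_ker, map_commutatorElement]
  exact Prod.ext (by simp [commutatorElement_def, hy1]) (by simp [commutatorElement_def, hx2])

theorem exists_pow_commutatorElement_chiIota1_mem_ker_chiProj
    (hG : ∀ x y : G, ∃ n : ℕ, 0 < n ∧ ⁅x, y⁆ ^ n = 1) (w : Chi G) (g : G) :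
    ∃ n, 0 < n ∧ ⁅w, chiIota1 G g⁆ ^ n ∈ (chiProj G).ker := by
  obtain ⟨n, hn, hgn⟩ := hG (chiProj G w).1 g
  have hproj : chiProj G ⁅w, chiIota1 G g⁆ = (⁅(chiProj G w).1, g⁆, 1) := by
    rw [map_commutatorElement, chiProj_chiIota1]
    simp [commutatorElement_def, Prod.ext_iff]
  refine ⟨n, hn, ?_⟩
  rw [MonoidHom.mem_ker, map_pow, hproj, Prod.pow_mk, hgn, one_pow]
  rfl

end WeakCommutativity

theorem chiL12_periodic_of_commutators_torsion (G : Type*) [Group G]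
    (hG : ∀ x y : G, ∃ n : ℕ, 0 < n ∧ ⁅x, y⁆ ^ n = 1) :
    ∀ z ∈ chiL12 G, ∃ n : ℕ, 0 < n ∧ z ^ n = 1 := by
  intro z hz
  have hL1 : chiL1 G = closure {w | ∃ l ∈ chiL G, ∃ g ∈ chiG1 G, ⁅l, g⁆ = w} :=
    commutator_def _ _
  have hpow : ∀ w ∈ {w | ∃ l ∈ chiL G, ∃ g ∈ chiG1 G, ⁅l, g⁆ = w},
      ∃ n, 0 < n ∧ w ^ n ∈ (chiProj G).ker := by
    rintro _ ⟨l, -, _, ⟨g, rfl⟩, rfl⟩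
    exact exists_pow_commutatorElement_chiIota1_mem_ker_chiProj G hG l g
  rw [chiL12, hL1] at hz
  rw [← isOfFinOrder_iff_pow_eq_one]
  exact isOfFinOrder_of_mem_commutator_closure (ker_chiProj_le_centralizer_chiL G)
    (hL1 ▸ chiL1_le_chiL G) (chiL2_le_chiL G) (hL1 ▸ chiL12_le_ker_chiProj G) hpow hz
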